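/- With a_n, b_n the total bitsum and total squared bitsum over solus bitstrings of length n, and c_n = F(n+2) b_n - a_n^2, the normalized variance satisfies \lim_{n\to\infty} c_n/(n F(n+2)^2) = 1/(5\sqrt5). -/

import Mathlib

open Filter

/-- A bitstring is *solus* if no two adjacent bits are both `1`. -/
def Solus (l : List Bool) : Prop :=
  l.Chain' (fun a b => ¬(a = true ∧ b = true))

open Classical in
/-- `a n` : total number of `1`s summed over all solus bitstrings of length `n`. -/
noncomputable def solusBitsum (n : ℕ) : ℕ :=
  ∑ v : Fin n → Bool, if Solus (List.ofFn v) then (List.ofFn v).count true else 0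

open Classical in
/-- `b n` : sum of squared bitsums over all solus bitstrings of length `n`. -/
noncomputable def solusBitsumSq (n : ℕ) : ℕ :=
  ∑ v : Fin n → Bool, if Solus (List.ofFn v) then ((List.ofFn v).count true) ^ 2 else 0


open Real goldenRatio

open Classical in
noncomputable def W (w : List Bool → ℕ) (n : ℕ) : ℕ :=
  ∑ v : Fin n → Bool, w (List.ofFn v)

lemma W_succ (w : List Bool → ℕ) (n : ℕ) :
    W w (n + 1) = W (fun l => w (true :: l)) n + W (fun l => w (false :: l)) n := by
  classical
  unfold W
  rw [← Fintype.sum_equiv (Fin.consEquiv (fun _ : Fin (n+1) => Bool))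
    (fun p : Bool × (Fin n → Bool) => w (List.ofFn (Fin.cons p.1 p.2))) _ (fun p => rfl)]
  rw [Fintype.sum_prod_type, Fintype.sum_bool]
  congr 1 <;> exact Finset.sum_congr rfl fun v _ => by
    simp [List.ofFn_succ, Fin.cons_succ]

lemma solus_false_cons {l : List Bool} : Solus (false :: l) ↔ Solus l := by
  simp [Solus, List.Chain', List.isChain_cons]

lemma solus_true_true {l : List Bool} : ¬ Solus (true :: true :: l) := by
  simp [Solus, List.Chain', List.isChain_cons_cons]

lemma solus_true_false {l : List Bool} : Solus (true :: false :: l) ↔ Solus l := by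
  simp [Solus, List.Chain', List.isChain_cons_cons, List.isChain_cons]

open Classical in
noncomputable def wc : List Bool → ℕ := fun l => if Solus l then 1 else 0
open Classical in
noncomputable def wa : List Bool → ℕ := fun l => if Solus l then l.count true else 0
open Classical in
noncomputable def wb : List Bool → ℕ := fun l => if Solus l then (l.count true) ^ 2 else 0

lemma W_zero (w : List Bool → ℕ) : W w 0 = w [] := by
  simp [W]

lemma wc_false (l : List Bool) : wc (false :: l) = wc l := by
  by_cases h : Solus l <;> simp [wc, solus_false_cons, h]

lemma wa_false (l : List Bool) : wa (false :: l) = wa l := by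
  by_cases h : Solus l <;> simp [wa, solus_false_cons, h]

lemma wb_false (l : List Bool) : wb (false :: l) = wb l := by
  by_cases h : Solus l <;> simp [wb, solus_false_cons, h]

lemma wc_tf (l : List Bool) : wc (true :: false :: l) = wc l := by
  by_cases h : Solus l <;> simp [wc, solus_true_false, h]

lemma wa_tf (l : List Bool) : wa (true :: false :: l) = wa l + wc l := by
  by_cases h : Solus l <;> simp [wa, wc, solus_true_false, h]

lemma wb_tf (l : List Bool) : wb (true :: false :: l) = wb l + 2 * wa l + wc l := by
  by_cases h : Solus l <;> simp [wb, wa, wc, solus_true_false, h] ; ring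

lemma wc_tt (l : List Bool) : wc (true :: true :: l) = 0 := by
  simp [wc, solus_true_true]
lemma wa_tt (l : List Bool) : wa (true :: true :: l) = 0 := by
  simp [wa, solus_true_true]
lemma wb_tt (l : List Bool) : wb (true :: true :: l) = 0 := by
  simp [wb, solus_true_true]

lemma W_congr {w w' : List Bool → ℕ} (h : ∀ l, w l = w' l) (n : ℕ) : W w n = W w' n := by
  unfold W; exact Finset.sum_congr rfl fun v _ => h _

lemma W_add (w w' : List Bool → ℕ) (n : ℕ) :
    W (fun l => w l + w' l) n = W w n + W w' n := by
  unfold W; rw [Finset.sum_add_distrib]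

lemma Wc_rec (n : ℕ) : W wc (n + 2) = W wc (n + 1) + W wc n := by
  rw [W_succ, W_succ, W_congr (fun l => wc_tt l), W_congr (fun l => wc_tf l),
    W_congr (fun l => wc_false l)]
  have : W (fun _ => 0) n = 0 := by unfold W; simp
  omega

lemma Wa_rec (n : ℕ) : W wa (n + 2) = W wa (n + 1) + W wa n + W wc n := by
  rw [W_succ, W_succ, W_congr (fun l => wa_tt l), W_congr (fun l => wa_tf l),
    W_congr (fun l => wa_false l), W_add]
  have : W (fun _ => 0) n = 0 := by unfold W; simp
  omega

lemma Wb_rec (n : ℕ) : W wb (n + 2) = W wb (n + 1) + W wb n + 2 * W wa n + W wc n := by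
  rw [W_succ, W_succ, W_congr (fun l => wb_tt l), W_congr (fun l => wb_tf l),
    W_congr (fun l => wb_false l), W_add, W_add]
  have h0 : W (fun _ => 0) n = 0 := by unfold W; simp
  have h2 : W (fun l => 2 * wa l) n = 2 * W wa n := by unfold W; rw [Finset.mul_sum]
  omega

lemma Wc_eq (n : ℕ) : W wc n = Nat.fib (n + 2) := by
  induction n using Nat.twoStepInduction with
  | zero => rw [W_zero]; simp [wc, Solus, List.Chain']
  | one =>
    rw [W_succ, W_zero, W_zero]
    simp [wc, Solus, List.Chain']
    decide
  | more n ih1 ih2 =>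
    rw [Wc_rec, ih1, ih2]
    simp only [Nat.fib_add_two]
    omega

lemma Wa_closed (n : ℕ) :
    5 * (W wa n : ℤ) = n * Nat.fib (n + 2) + (n + 2) * Nat.fib n := by
  induction n using Nat.twoStepInduction with
  | zero => simp [W_zero, wa, Solus, List.Chain']
  | one =>
    rw [W_succ, W_zero, W_zero]
    norm_num [wa, Solus, List.Chain']
  | more n ih1 ih2 =>
    have h := Wa_rec n
    have hc := Wc_eq n
    have : (W wa (n+2) : ℤ) = W wa (n+1) + W wa n + Nat.fib (n+2) := by
      rw [h, hc]; push_cast; ring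
    rw [this]
    simp only [Nat.fib_add_two] at *
    push_cast at *
    ring_nf
    ring_nf at ih1 ih2
    linarith

lemma Wb_closed (n : ℕ) :
    25 * (W wb n : ℤ) =
      (5 * n ^ 2 + 14 * n + 8) * Nat.fib n - n * Nat.fib (n + 2) := by
  induction n using Nat.twoStepInduction with
  | zero => simp [W_zero, wb, Solus, List.Chain']
  | one =>
    rw [W_succ, W_zero, W_zero]
    norm_num [wb, Solus, List.Chain']
  | more n ih1 ih2 =>
    have h := Wb_rec n
    have hc := Wc_eq n
    have ha := Wa_closed n
    have : (W wb (n+2) : ℤ) = W wb (n+1) + W wb n + 2 * W wa n + Nat.fib (n+2) := by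
      rw [h, hc]; push_cast; ring
    rw [this]
    simp only [Nat.fib_add_two] at *
    push_cast at *
    ring_nf
    ring_nf at ih1 ih2 ha
    linarith

open Classical in
lemma solusBitsum_eq (n : ℕ) :
    (∑ v : Fin n → Bool, if Solus (List.ofFn v) then (List.ofFn v).count true else 0) = W wa n :=
  rfl

open Classical in
lemma solusBitsumSq_eq (n : ℕ) :
    (∑ v : Fin n → Bool, if Solus (List.ofFn v) then ((List.ofFn v).count true) ^ 2 else 0)
      = W wb n :=
  rfl
open Real goldenRatio

noncomputable def gg (n : ℕ) : ℝ := (Nat.fib n : ℝ) / (Nat.fib (n + 2) : ℝ)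

lemma sqrt5_pos : (0:ℝ) < Real.sqrt 5 := Real.sqrt_pos.mpr (by norm_num)

lemma fib_key (n : ℕ) :
    (Nat.fib n : ℝ) - ψ ^ 2 * (Nat.fib (n + 2) : ℝ)
      = ψ ^ n * (ψ ^ 4 - 1) / Real.sqrt 5 := by
  rw [Real.coe_fib_eq, Real.coe_fib_eq]
  have hps : ψ ^ 2 * φ ^ 2 = 1 := by
    rw [← mul_pow, goldenConj_mul_goldenRatio]; norm_num
  have key : (φ ^ n - ψ ^ n) - ψ ^ 2 * (φ ^ (n+2) - ψ ^ (n+2)) = ψ ^ n * (ψ ^ 4 - 1) := by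
    rw [pow_add, pow_add]
    linear_combination (-(φ ^ n)) * hps
  have expand : (φ ^ n - ψ ^ n) / Real.sqrt 5 - ψ ^ 2 * ((φ ^ (n+2) - ψ ^ (n+2)) / Real.sqrt 5)
      = ((φ ^ n - ψ ^ n) - ψ ^ 2 * (φ ^ (n+2) - ψ ^ (n+2))) / Real.sqrt 5 := by
    ring
  rw [expand, key]

lemma fib_pos' (n : ℕ) : (0:ℝ) < (Nat.fib (n + 2) : ℝ) := by
  have := Nat.fib_pos.mpr (Nat.succ_pos (n+1))
  exact_mod_cast this

lemma abs_goldConj_lt_one : |ψ| < 1 :=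
  abs_lt.mpr ⟨neg_one_lt_goldenConj, by linarith [goldenConj_neg]⟩

lemma gg_sub : ∀ n, gg n - ψ ^ 2 = ψ ^ n * (ψ ^ 4 - 1) / Real.sqrt 5 / (Nat.fib (n+2) : ℝ) := by
  intro n
  have h := fib_key n
  have hF := fib_pos' n
  rw [gg, eq_div_iff (ne_of_gt hF), sub_mul, div_mul_cancel₀ _ (ne_of_gt hF)]
  linarith [h]

lemma bound (n : ℕ) : ‖gg n - ψ ^ 2‖ ≤ (|ψ ^ 4 - 1| / Real.sqrt 5) * |ψ| ^ n := by
  rw [gg_sub n]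
  have hF := fib_pos' n
  have h1 : (1:ℝ) ≤ (Nat.fib (n+2) : ℝ) := by
    have := Nat.fib_pos.mpr (Nat.succ_pos (n+1)); exact_mod_cast this
  rw [Real.norm_eq_abs, abs_div, abs_div, abs_of_pos hF, abs_of_pos sqrt5_pos, abs_mul,
    abs_pow]
  calc |ψ| ^ n * |ψ ^ 4 - 1| / Real.sqrt 5 / (Nat.fib (n+2) : ℝ)
      ≤ |ψ| ^ n * |ψ ^ 4 - 1| / Real.sqrt 5 / 1 := by
        apply div_le_div_of_nonneg_left _ _ h1
        · positivity
        · norm_num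
    _ = (|ψ ^ 4 - 1| / Real.sqrt 5) * |ψ| ^ n := by ring

lemma tendsto_gg : Tendsto (fun n => gg n - ψ ^ 2) atTop (nhds 0) := by
  apply squeeze_zero_norm bound
  simpa using (tendsto_pow_atTop_nhds_zero_of_lt_one (abs_nonneg ψ)
    abs_goldConj_lt_one).const_mul (|ψ ^ 4 - 1| / Real.sqrt 5)

lemma bound2 (n : ℕ) : ‖(n:ℝ) * (gg n - ψ ^ 2)‖
    ≤ (|ψ ^ 4 - 1| / Real.sqrt 5) * ((n:ℝ) * |ψ| ^ n) := by
  rw [norm_mul, Real.norm_natCast]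
  calc (n:ℝ) * ‖gg n - ψ ^ 2‖ ≤ (n:ℝ) * ((|ψ ^ 4 - 1| / Real.sqrt 5) * |ψ| ^ n) :=
        mul_le_mul_of_nonneg_left (bound n) (Nat.cast_nonneg n)
    _ = (|ψ ^ 4 - 1| / Real.sqrt 5) * ((n:ℝ) * |ψ| ^ n) := by ring

lemma tendsto_ngg : Tendsto (fun n : ℕ => (n : ℝ) * (gg n - ψ ^ 2)) atTop (nhds 0) := by
  apply squeeze_zero_norm bound2
  simpa using (tendsto_self_mul_const_pow_of_abs_lt_one
      (by rw [abs_abs]; exact abs_goldConj_lt_one)).const_mul (|ψ ^ 4 - 1| / Real.sqrt 5)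

lemma hbeta : (ψ ^ 2) ^ 2 - 3 * ψ ^ 2 + 1 = 0 := by
  have h := goldenConj_sq
  linear_combination (ψ ^ 2 + ψ - 1) * h

lemma c_identity (n : ℕ) :
    25 * ((Nat.fib (n + 2) : ℤ) * (W wb n) - (W wa n : ℤ) ^ 2)
      = (5 * n ^ 2 + 14 * n + 8) * Nat.fib n * Nat.fib (n + 2)
        - n * (Nat.fib (n + 2) : ℤ) ^ 2
        - (n * Nat.fib (n + 2) + (n + 2) * Nat.fib n) ^ 2 := by
  have ha := Wa_closed n
  have hb := Wb_closed n
  linear_combination (Nat.fib (n + 2) : ℤ) * hb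
    - (5 * (W wa n : ℤ) + ((n : ℤ) * Nat.fib (n + 2) + ((n : ℤ) + 2) * Nat.fib n)) * ha

lemma pointwise (n : ℕ) (hn : 1 ≤ n) :
    (((Nat.fib (n + 2) : ℤ) * (W wb n) - (W wa n : ℤ) ^ 2 : ℤ) : ℝ) /
        (n * (Nat.fib (n + 2) : ℝ) ^ 2)
      = (3 * ((n : ℝ) * (gg n - ψ ^ 2)) - ((n : ℝ) * (gg n - ψ ^ 2)) * (gg n + ψ ^ 2)
          + 10 * gg n + 8 * (gg n * ((n : ℝ))⁻¹) - 1 - 4 * (gg n) ^ 2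
          - 4 * ((gg n) ^ 2 * ((n : ℝ))⁻¹)) / 25 := by
  have hF := fib_pos' n
  have hF' : (Nat.fib (n + 2) : ℝ) ≠ 0 := ne_of_gt hF
  have hn' : (n : ℝ) ≠ 0 := Nat.cast_ne_zero.mpr (by omega)
  have hb := hbeta
  have hcR : 25 * ((((Nat.fib (n + 2) : ℤ) * (W wb n) - (W wa n : ℤ) ^ 2 : ℤ)) : ℝ)
      = (5 * (n:ℝ) ^ 2 + 14 * n + 8) * Nat.fib n * Nat.fib (n + 2)
        - n * (Nat.fib (n + 2) : ℝ) ^ 2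
        - ((n:ℝ) * Nat.fib (n + 2) + ((n:ℝ) + 2) * Nat.fib n) ^ 2 := by
    exact_mod_cast congrArg (fun z : ℤ => (z : ℝ)) (c_identity n)
  rw [div_eq_div_iff (by positivity) (by norm_num : (25:ℝ) ≠ 0)]
  rw [mul_comm, hcR]
  unfold gg
  field_simp
  linear_combination (-16 * (n:ℝ)^2 * ((Nat.fib (n+2):ℝ))^2) * hb

lemma tendsto_gg' : Tendsto gg atTop (nhds (ψ ^ 2)) := by
  have := tendsto_gg.add_const (ψ ^ 2)
  simpa using this

lemma limit_T : Tendsto (fun n : ℕ =>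
    (3 * ((n : ℝ) * (gg n - ψ ^ 2)) - ((n : ℝ) * (gg n - ψ ^ 2)) * (gg n + ψ ^ 2)
      + 10 * gg n + 8 * (gg n * ((n : ℝ))⁻¹) - 1 - 4 * (gg n) ^ 2
      - 4 * ((gg n) ^ 2 * ((n : ℝ))⁻¹)) / 25) atTop
    (nhds ((3 * (0:ℝ) - (0:ℝ) * (ψ ^ 2 + ψ ^ 2) + 10 * ψ ^ 2 + 8 * (ψ ^ 2 * 0) - 1
      - 4 * (ψ ^ 2) ^ 2 - 4 * ((ψ ^ 2) ^ 2 * 0)) / 25)) := by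
  apply Tendsto.div_const
  have hInv : Tendsto (fun n : ℕ => ((n : ℝ))⁻¹) atTop (nhds 0) :=
    tendsto_inv_atTop_nhds_zero_nat
  exact ((((((tendsto_ngg.const_mul 3).sub
    (tendsto_ngg.mul (tendsto_gg'.add tendsto_const_nhds))).add
    (tendsto_gg'.const_mul 10)).add ((tendsto_gg'.mul hInv).const_mul 8)).sub
    tendsto_const_nhds).sub ((tendsto_gg'.pow 2).const_mul 4)).sub
    (((tendsto_gg'.pow 2).mul hInv).const_mul 4)

lemma final_val : (3 * (0:ℝ) - (0:ℝ) * (ψ ^ 2 + ψ ^ 2) + 10 * ψ ^ 2 + 8 * (ψ ^ 2 * 0) - 1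
      - 4 * (ψ ^ 2) ^ 2 - 4 * ((ψ ^ 2) ^ 2 * 0)) / 25 = 1 / (5 * Real.sqrt 5) := by
  have h5 : Real.sqrt 5 ^ 2 = 5 := Real.sq_sqrt (by norm_num)
  have h5p := sqrt5_pos
  rw [div_eq_div_iff (by norm_num) (by positivity)]
  linear_combination (5 - 5/4 * Real.sqrt 5 + 5 * Real.sqrt 5 ^ 2
    - 5/4 * Real.sqrt 5 ^ 3) * h5

/-- The normalized variance of the bitsum of a random solus string: with
`cₙ = F(n+2) bₙ - aₙ²`, `lim cₙ/(n F(n+2)²) = 1/(5√5)`. -/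
theorem solus_bitsum_variance :
    Tendsto (fun n : ℕ =>
        (((Nat.fib (n + 2) : ℤ) * solusBitsumSq n - (solusBitsum n : ℤ) ^ 2 : ℤ) : ℝ) /
          (n * (Nat.fib (n + 2) : ℝ) ^ 2))
      atTop (nhds (1 / (5 * Real.sqrt 5))) := by
  have h := limit_T
  rw [final_val] at h
  refine h.congr' ?_
  filter_upwards [eventually_ge_atTop 1] with n hn
  have hp := pointwise n hn
  rw [show solusBitsum n = W wa n from rfl, show solusBitsumSq n = W wb n from rfl]
  exact hp.symm
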